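/- arXiv:0809.3602 — 4 statements merged into one kernel-verified Lean document; each statement's English description precedes it below -/
import Mathlib

section
/- Let n ≥ 2, let λ_1 ≤ λ_2 ≤ … ≤ λ_n be real numbers, and let ξ ∈ ℝ^n be nonzero. Then the polynomial I_ξ(t) = Σ_{i=1}^n ξ_i² Π_i(t) has degree exactly n−1 (its leading coefficient is (−1)^{n−1} Σ_i ξ_i² ≠ 0), all of its complex roots are real, and if t_1 ≤ t_2 ≤ … ≤ t_{n−1} denote its roots listed with multiplicity, then λ_i ≤ t_i ≤ λ_{i+1} for every i = 1, …, n−1. -/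
open Polynomial

/-- `Π_i(t) = ∏_{j ≠ i} (λ_j − t)` as a real polynomial in `t`. -/
noncomputable def PiPoly (n : ℕ) (lam : Fin n → ℝ) (i : Fin n) : Polynomial ℝ :=
  ∏ j ∈ Finset.univ.erase i, (C (lam j) - X)

/-- `I_ξ(t) = Σ_{i=1}^n ξ_i² Π_i(t)` as a real polynomial in `t`. -/
noncomputable def IPoly (n : ℕ) (lam : Fin n → ℝ) (ξ : Fin n → ℝ) : Polynomial ℝ :=
  ∑ i, C ((ξ i) ^ 2) * PiPoly n lam i

/-!
Group the indices by the value of `λ_i`, keeping only those with `ξ_i ≠ 0`. If `v_0 < ⋯ < v_p` are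
the distinct values that remain and `w_k > 0` is the sum of the `ξ_i²` over `λ_i = v_k`, then
`I_ξ(t) = B(t) K(t)`, where `B` is the product of `λ_j − t` over the eigenvalues left over (with
multiplicity) and `K(t) = Σ_k w_k ∏_{l ≠ k} (v_l − t)`. Since `K(v_k) = w_k ∏_{l ≠ k} (v_l − v_k)` has
sign `(−1)^k`, the intermediate value theorem gives a root of `K` strictly between any two
consecutive `v_k`, and these `p` roots are all the roots of `K`. So the `n − 1` roots of `I_ξ` are
real, and below every level there are at most as many of them as eigenvalues and at most one fewer;
for the sorted lists this is `λ_i ≤ t_i ≤ λ_{i+1}`.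
-/

open Finset

section NodeProd

variable {R : Type*} [CommRing R]

noncomputable def nodeProd (m : Multiset R) : R[X] := (m.map fun s => C s - X).prod

theorem nodeProd_add (a b : Multiset R) : nodeProd (a + b) = nodeProd a * nodeProd b := by
  simp [nodeProd]

theorem nodeProd_eq (m : Multiset R) :
    nodeProd m = C ((-1) ^ m.card) * (m.map fun s => X - C s).prod := by
  have : (m.map fun s => C s - X) = (m.map fun s => X - C s).map Neg.neg := by
    simp [Multiset.map_map]
  rw [nodeProd, this, Multiset.prod_map_neg, Multiset.card_map]
  simp

theorem eval_nodeProd (m : Multiset R) (x : R) :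
    (nodeProd m).eval x = (m.map fun s => s - x).prod := by
  simp [nodeProd, eval_multiset_prod, Multiset.map_map]

variable [IsDomain R]

theorem nodeProd_ne_zero (m : Multiset R) : nodeProd m ≠ 0 := by
  rw [nodeProd_eq]
  exact mul_ne_zero (by simp) (monic_multiset_prod_of_monic _ _ fun s _ => monic_X_sub_C s).ne_zero

theorem natDegree_nodeProd (m : Multiset R) : (nodeProd m).natDegree = m.card := by
  rw [nodeProd_eq, natDegree_C_mul (by simp), natDegree_multiset_prod_X_sub_C_eq_card]

theorem leadingCoeff_nodeProd (m : Multiset R) : (nodeProd m).leadingCoeff = (-1) ^ m.card := by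
  rw [nodeProd_eq, leadingCoeff_mul, leadingCoeff_C,
    (monic_multiset_prod_of_monic _ _ fun s _ => monic_X_sub_C s).leadingCoeff, mul_one]

theorem roots_nodeProd (m : Multiset R) : (nodeProd m).roots = m := by
  rw [nodeProd_eq, roots_C_mul _ (by simp), roots_multiset_prod_X_sub_C]

variable {ι : Type*} (s : Finset ι) (c : ι → R) {m : ι → Multiset R} {d : ℕ}

theorem natDegree_sum_C_mul_nodeProd_le (hm : ∀ i ∈ s, (m i).card = d) :
    (∑ i ∈ s, C (c i) * nodeProd (m i)).natDegree ≤ d :=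
  natDegree_sum_le_of_forall_le _ _ fun i hi =>
    (natDegree_C_mul_le _ _).trans (natDegree_nodeProd (m i) ▸ (hm i hi).le)

theorem coeff_sum_C_mul_nodeProd (hm : ∀ i ∈ s, (m i).card = d) :
    (∑ i ∈ s, C (c i) * nodeProd (m i)).coeff d = (-1) ^ d * ∑ i ∈ s, c i := by
  rw [finsetSum_coeff, Finset.mul_sum]
  refine Finset.sum_congr rfl fun i hi => ?_
  rw [coeff_C_mul, ← hm i hi, ← natDegree_nodeProd, coeff_natDegree, leadingCoeff_nodeProd,
    natDegree_nodeProd, mul_comm]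

theorem degree_sum_C_mul_nodeProd (hm : ∀ i ∈ s, (m i).card = d) (hc : ∑ i ∈ s, c i ≠ 0) :
    (∑ i ∈ s, C (c i) * nodeProd (m i)).degree = d := by
  refine degree_eq_of_le_of_coeff_ne_zero
    (degree_le_of_natDegree_le (natDegree_sum_C_mul_nodeProd_le s c hm)) ?_
  rw [coeff_sum_C_mul_nodeProd s c hm]
  exact mul_ne_zero (by simp) hc

theorem leadingCoeff_sum_C_mul_nodeProd (hm : ∀ i ∈ s, (m i).card = d) (hc : ∑ i ∈ s, c i ≠ 0) :
    (∑ i ∈ s, C (c i) * nodeProd (m i)).leadingCoeff = (-1) ^ d * ∑ i ∈ s, c i := by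
  rw [leadingCoeff, natDegree_eq_of_degree_eq_some (degree_sum_C_mul_nodeProd s c hm hc),
    coeff_sum_C_mul_nodeProd s c hm]

end NodeProd

theorem Polynomial.roots_eq_map_of_injective {R ι : Type*} [CommRing R] [IsDomain R] [Fintype ι]
    {P : R[X]} (hP : P ≠ 0) (hdeg : P.natDegree ≤ Fintype.card ι) {u : ι → R}
    (hu : Function.Injective u) (hroot : ∀ i, P.IsRoot (u i)) :
    P.roots = univ.val.map u := by
  have hle : univ.val.map u ≤ P.roots := by
    refine (Multiset.le_iff_subset (univ.nodup.map hu)).mpr fun a ha => ?_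
    obtain ⟨i, -, rfl⟩ := Multiset.mem_map.mp ha
    exact (mem_roots hP).mpr (hroot i)
  exact (Multiset.eq_of_le_of_card_le hle (by simpa using (card_roots' P).trans hdeg)).symm

theorem Polynomial.im_eq_zero_of_aeval_eq_zero {P : ℝ[X]} (hP : P ≠ 0)
    (hsplit : P.roots.card = P.natDegree) {z : ℂ} (hz : aeval z P = 0) : z.im = 0 := by
  rw [aeval_def, eval₂_eq_eval_map] at hz
  have hz' : z ∈ (P.map (algebraMap ℝ ℂ)).roots := (mem_roots (Polynomial.map_ne_zero hP)).mpr hz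
  rw [(splits_iff_card_roots.mpr hsplit).roots_map] at hz'
  obtain ⟨r, -, rfl⟩ := Multiset.mem_map.mp hz'
  simp

theorem Polynomial.exists_isRoot_mem_Ioo_of_eval_mul_eval_neg (P : ℝ[X]) {a b : ℝ} (hab : a < b)
    (h : P.eval a * P.eval b < 0) : ∃ c ∈ Set.Ioo a b, P.IsRoot c := by
  have hP : ContinuousOn (fun x => P.eval x) (Set.Icc a b) := P.continuous.continuousOn
  have h0 : (0 : ℝ) ∈ (fun x => P.eval x) '' Set.Ioo a b := by
    rcases mul_neg_iff.mp h with ⟨ha, hb⟩ | ⟨ha, hb⟩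
    · exact intermediate_value_Ioo' hab.le hP ⟨hb, ha⟩
    · exact intermediate_value_Ioo hab.le hP ⟨ha, hb⟩
  exact h0

namespace List

variable {α : Type*} [LinearOrder α] {l : List α} {i : ℕ}

theorem le_getElem_of_mem_take (hl : l.Pairwise (· ≤ ·)) (hi : i < l.length) {y : α}
    (hy : y ∈ l.take i) : y ≤ l[i] := by
  rw [← take_append_drop i l, pairwise_append] at hl
  exact hl.2.2 y hy l[i] (by rw [drop_eq_getElem_cons hi]; exact mem_cons_self)

theorem getElem_le_of_mem_drop (hl : l.Pairwise (· ≤ ·)) (hi : i < l.length) {y : α}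
    (hy : y ∈ l.drop i) : l[i] ≤ y := by
  rw [drop_eq_getElem_cons hi, mem_cons] at hy
  rcases hy with rfl | hy
  · rfl
  rw [← take_append_drop (i + 1) l, pairwise_append] at hl
  exact hl.2.2 l[i] (mem_take_iff_getElem.mpr ⟨i, by omega, rfl⟩) y hy

theorem le_getElem_of_countP_lt_le (hl : l.Pairwise (· ≤ ·)) (hi : i < l.length) {x : α}
    (h : l.countP (· < x) ≤ i) : x ≤ l[i] := by
  by_contra! hlt
  have htake : (l.take i).countP (· < x) = i := by
    rw [countP_eq_length.mpr, length_take_of_le hi.le]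
    intro y hy
    simpa using (le_getElem_of_mem_take hl hi hy).trans_lt hlt
  have hdrop : 0 < (l.drop i).countP (· < x) :=
    countP_pos_iff.mpr ⟨l[i], by rw [drop_eq_getElem_cons hi]; exact mem_cons_self,
      by simpa using hlt⟩
  have := countP_append (p := fun y => decide (y < x)) (l₁ := l.take i) (l₂ := l.drop i)
  rw [take_append_drop] at this
  omega

theorem getElem_le_of_lt_countP_le (hl : l.Pairwise (· ≤ ·)) (hi : i < l.length) {x : α}
    (h : i < l.countP (· ≤ x)) : l[i] ≤ x := by
  by_contra! hlt
  have hdrop : (l.drop i).countP (· ≤ x) = 0 := by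
    rw [countP_eq_zero]
    intro y hy
    simpa using hlt.trans_le (getElem_le_of_mem_drop hl hi hy)
  have htake := countP_le_length (p := fun y => decide (y ≤ x)) (l := l.take i)
  have := countP_append (p := fun y => decide (y ≤ x)) (l₁ := l.take i) (l₂ := l.drop i)
  rw [take_append_drop] at this
  simp only [length_take_of_le hi.le] at htake
  omega

end List

theorem Multiset.countP_univ_map {α ι : Type*} [Fintype ι] (u : ι → α) (P : α → Prop)
    [DecidablePred P] : (univ.val.map u).countP P = #{i | P (u i)} := by
  rw [Multiset.countP_map]; rfl

theorem Multiset.erase_eq_sub_add_erase {α : Type*} [DecidableEq α] {s M : Multiset α}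
    (hsM : s ≤ M) {v : α} (hv : v ∈ s) : M.erase v = (M - s) + s.erase v := by
  conv_lhs => rw [← tsub_add_cancel_of_le hsM]
  exact Multiset.erase_add_right_pos _ hv

theorem Finset.val_eq_map_orderEmbOfFin {α : Type*} [LinearOrder α] (t : Finset α) {p : ℕ}
    (hp : #t = p + 1) : t.val = univ.val.map (t.orderEmbOfFin hp) := by
  conv_lhs => rw [← map_orderEmbOfFin_univ t hp]
  rfl

theorem Finset.card_filter_lt_orderEmbOfFin {α : Type*} [LinearOrder α] (t : Finset α) {p : ℕ}
    (hp : #t = p + 1) (k : Fin (p + 1)) : #{s ∈ t | s < t.orderEmbOfFin hp k} = k := by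
  change Multiset.card (t.val.filter _) = _
  rw [← Multiset.countP_eq_card_filter, val_eq_map_orderEmbOfFin t hp, Multiset.countP_univ_map]
  simp [filter_gt_eq_Iio]

section Interlaces

variable {α : Type*} [LinearOrder α]

/-- Equivalently, `M₀ ≤ R₀ ≤ M₁ ≤ R₁ ≤ ⋯ ≤ R_{k-1} ≤ M_k` for the sorted elements. -/
def Interlaces (R M : Multiset α) : Prop :=
  R.card + 1 = M.card ∧
    ∀ x : α, R.countP (· < x) ≤ M.countP (· < x) ∧ M.countP (· ≤ x) ≤ R.countP (· ≤ x) + 1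

theorem Interlaces.card_eq {R M : Multiset α} (h : Interlaces R M) : R.card = M.card - 1 := by
  have := h.1
  omega

theorem Interlaces.add_left {R M : Multiset α} (h : Interlaces R M) (B : Multiset α) :
    Interlaces (B + R) (B + M) := by
  refine ⟨by simp only [Multiset.card_add]; have := h.1; omega, fun x => ?_⟩
  simp only [Multiset.countP_add]
  have := (h.2 x)
  omega

theorem interlaces_map_of_le {p : ℕ} {ν : Fin (p + 1) → α} {u : Fin p → α}
    (hνu : ∀ i, ν i.castSucc ≤ u i) (huν : ∀ i, u i ≤ ν i.succ) :
    Interlaces (univ.val.map u) (univ.val.map ν) := by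
  refine ⟨by simp, fun x => ?_⟩
  simp only [Multiset.countP_univ_map]
  constructor
  · refine card_le_card_of_injOn Fin.castSucc (fun i hi => ?_) (Fin.castSucc_injective p).injOn
    simp only [coe_filter, mem_univ, true_and] at hi ⊢
    exact (hνu i).trans_lt hi
  · rw [Fin.card_filter_univ_succ' (fun k => ν k ≤ x)]
    have : #{i : Fin p | ν i.succ ≤ x} ≤ #{i | u i ≤ x} :=
      card_le_card (monotone_filter_right _ fun i _ hi => (huν i).trans hi)
    split_ifs <;> omega

theorem Monotone.countP_lt_map_le {n : ℕ} {lam : Fin n → α} (hlam : Monotone lam) (i : Fin n) :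
    (univ.val.map lam).countP (· < lam i) ≤ i := by
  rw [Multiset.countP_univ_map, ← Fin.card_Iio i]
  exact card_le_card fun j hj => mem_Iio.mpr (hlam.reflect_lt (mem_filter.mp hj).2)

theorem Monotone.le_countP_le_map {n : ℕ} {lam : Fin n → α} (hlam : Monotone lam) (i : Fin n) :
    (i : ℕ) + 1 ≤ (univ.val.map lam).countP (· ≤ lam i) := by
  rw [Multiset.countP_univ_map, ← Fin.card_Iic i]
  exact card_le_card fun j hj => mem_filter.mpr ⟨mem_univ j, hlam (mem_Iic.mp hj)⟩

theorem Interlaces.le_getD_sort_le {n : ℕ} {R : Multiset α} {lam : Fin n → α}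
    (hlam : Monotone lam) (h : Interlaces R (univ.val.map lam)) (d : α) (i : ℕ) (hi : i + 1 < n) :
    lam ⟨i, Nat.lt_of_succ_lt hi⟩ ≤ (R.sort (· ≤ ·)).getD i d ∧
      (R.sort (· ≤ ·)).getD i d ≤ lam ⟨i + 1, hi⟩ := by
  have hl := Multiset.pairwise_sort R (· ≤ ·)
  have hlen : i < (R.sort (· ≤ ·)).length := by
    have := h.card_eq
    simp only [Multiset.card_map, card_val, card_univ, Fintype.card_fin] at this
    rw [Multiset.length_sort]
    omega
  have hcount (P : α → Prop) [DecidablePred P] : (R.sort (· ≤ ·)).countP P = R.countP P := by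
    rw [← Multiset.coe_countP, Multiset.sort_eq]
  rw [List.getD_eq_getElem _ _ hlen]
  constructor
  · refine List.le_getElem_of_countP_lt_le hl hlen ?_
    rw [hcount]
    exact (h.2 _).1.trans (hlam.countP_lt_map_le ⟨i, Nat.lt_of_succ_lt hi⟩)
  · refine List.getElem_le_of_lt_countP_le hl hlen ?_
    have h₁ := (h.2 (lam ⟨i + 1, hi⟩)).2
    have h₂ : i + 1 + 1 ≤ _ := hlam.le_countP_le_map ⟨i + 1, hi⟩
    rw [hcount]
    omega

end Interlaces

theorem neg_one_pow_card_filter_lt_mul_prod_sub_pos {K : Type*} [CommRing K] [LinearOrder K]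
    [IsStrictOrderedRing K] (u : Finset K) {x : K} (hx : x ∉ u) :
    0 < (-1) ^ #{v ∈ u | v < x} * ∏ v ∈ u, (v - x) := by
  rw [← prod_filter_mul_prod_filter_not u (· < x)]
  have hneg : ∏ v ∈ u with v < x, (v - x) =
      (-1) ^ #{v ∈ u | v < x} * ∏ v ∈ u with v < x, (x - v) := by
    rw [← prod_neg]; simp
  have hlt : 0 < ∏ v ∈ u with v < x, (x - v) :=
    prod_pos fun v hv => sub_pos.mpr (mem_filter.mp hv).2
  have hgt : 0 < ∏ v ∈ u with ¬ v < x, (v - x) := prod_pos fun v hv => by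
    obtain ⟨hvu, hvx⟩ := mem_filter.mp hv
    exact sub_pos.mpr (lt_of_le_of_ne (not_lt.mp hvx) fun h => hx (h ▸ hvu))
  rw [hneg, ← mul_assoc, ← mul_assoc, ← pow_add, Even.neg_one_pow ⟨_, rfl⟩, one_mul]
  exact mul_pos hlt hgt

/-- `nodeProd t · Σ_{v ∈ t} w v / (v - X)`, the numerator of the secular function. -/
noncomputable def secularPoly (t : Finset ℝ) (w : ℝ → ℝ) : ℝ[X] :=
  ∑ v ∈ t, C (w v) * nodeProd (t.val.erase v)

section secularPoly

variable {t : Finset ℝ} {w : ℝ → ℝ}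

theorem degree_secularPoly (hw : ∀ v ∈ t, 0 < w v) (ht : t.Nonempty) :
    (secularPoly t w).degree = (#t - 1 : ℕ) :=
  degree_sum_C_mul_nodeProd t w (fun _ hv => Multiset.card_erase_of_mem hv) (sum_pos hw ht).ne'

theorem eval_secularPoly_of_mem {v : ℝ} (hv : v ∈ t) :
    (secularPoly t w).eval v = w v * ∏ s ∈ t.erase v, (s - v) := by
  rw [secularPoly, eval_finsetSum, sum_eq_single_of_mem v hv]
  · simp [eval_nodeProd, Finset.prod]
  · intro s _ hsv
    have : v - v ∈ (t.val.erase s).map (· - v) :=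
      Multiset.mem_map_of_mem _ ((Multiset.mem_erase_of_ne (Ne.symm hsv)).mpr hv)
    rw [eval_mul, eval_nodeProd, Multiset.prod_eq_zero (by simpa using this), mul_zero]

theorem neg_one_pow_mul_eval_secularPoly_pos (hw : ∀ v ∈ t, 0 < w v) {v : ℝ} (hv : v ∈ t) :
    0 < (-1) ^ #{s ∈ t | s < v} * (secularPoly t w).eval v := by
  have h := neg_one_pow_card_filter_lt_mul_prod_sub_pos (t.erase v) (notMem_erase v t)
  rw [filter_erase, erase_eq_of_notMem (by simp)] at h
  rw [eval_secularPoly_of_mem hv, mul_left_comm]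
  exact mul_pos (hw v hv) h

theorem interlaces_roots_secularPoly (hw : ∀ v ∈ t, 0 < w v) (ht : t.Nonempty) :
    Interlaces (secularPoly t w).roots t.val := by
  obtain ⟨p, hp⟩ : ∃ p, #t = p + 1 := ⟨#t - 1, by have := ht.card_pos; omega⟩
  set ν := t.orderEmbOfFin hp
  have hsign (k : Fin (p + 1)) : 0 < (-1) ^ (k : ℕ) * (secularPoly t w).eval (ν k) := by
    simpa [card_filter_lt_orderEmbOfFin] using
      neg_one_pow_mul_eval_secularPoly_pos hw (t.orderEmbOfFin_mem hp k)
  have hchange (i : Fin p) :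
      (secularPoly t w).eval (ν i.castSucc) * (secularPoly t w).eval (ν i.succ) < 0 := by
    have h := mul_pos (hsign i.castSucc) (hsign i.succ)
    rw [Fin.val_castSucc, Fin.val_succ, mul_mul_mul_comm, ← pow_add,
      Odd.neg_one_pow ⟨i, by ring⟩] at h
    linarith
  choose u hu hroot using fun i : Fin p =>
    (secularPoly t w).exists_isRoot_mem_Ioo_of_eval_mul_eval_neg
      (ν.strictMono (Fin.castSucc_lt_succ (i := i))) (hchange i)
  have hu_mono : StrictMono u := fun i j hij =>
    calc u i < ν i.succ := (hu i).2
      _ ≤ ν j.castSucc := ν.monotone (Fin.succ_le_castSucc_iff.mpr hij)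
      _ < u j := (hu j).1
  have hdeg := degree_secularPoly hw ht
  have hroots : (secularPoly t w).roots = univ.val.map u :=
    roots_eq_map_of_injective (fun h => by simp [h] at hdeg)
      (by simp [natDegree_eq_of_degree_eq_some hdeg, hp]) hu_mono.injective hroot
  rw [hroots, val_eq_map_orderEmbOfFin t hp]
  exact interlaces_map_of_le (fun i => (hu i).1.le) (fun i => (hu i).2.le)

end secularPoly

theorem sum_sq_pos_of_ne_zero {ι : Type*} [Fintype ι] {ξ : ι → ℝ} (hξ : ξ ≠ 0) :
    0 < ∑ i, ξ i ^ 2 := by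
  obtain ⟨j, hj⟩ := Function.ne_iff.mp hξ
  exact sum_pos' (fun i _ => sq_nonneg _) ⟨j, mem_univ j, pow_two_pos_of_ne_zero hj⟩

theorem PiPoly_eq_nodeProd (n : ℕ) (lam : Fin n → ℝ) (i : Fin n) :
    PiPoly n lam i = nodeProd ((univ.val.map lam).erase (lam i)) := by
  rw [PiPoly, ← Multiset.map_erase_of_mem _ _ (mem_univ_val i), nodeProd, Multiset.map_map]
  rfl

section IPoly

variable {n : ℕ} (lam ξ : Fin n → ℝ)

theorem IPoly_eq_sum_nodeProd :
    IPoly n lam ξ = ∑ i, C (ξ i ^ 2) * nodeProd ((univ.val.map lam).erase (lam i)) := by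
  simp only [IPoly, PiPoly_eq_nodeProd]

noncomputable def activeNodes : Finset ℝ := (univ.filter fun i => ξ i ≠ 0).image lam

noncomputable def nodeWeight (v : ℝ) : ℝ := ∑ i with lam i = v, ξ i ^ 2

variable {lam ξ}

theorem nodeWeight_pos {v : ℝ} (hv : v ∈ activeNodes lam ξ) : 0 < nodeWeight lam ξ v := by
  obtain ⟨j, hj, rfl⟩ := mem_image.mp hv
  exact sum_pos' (fun i _ => sq_nonneg _)
    ⟨j, by simp, pow_two_pos_of_ne_zero (mem_filter.mp hj).2⟩

theorem nodeWeight_eq_zero {v : ℝ} (hv : v ∉ activeNodes lam ξ) : nodeWeight lam ξ v = 0 :=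
  sum_eq_zero fun i hi => by
    by_contra hξi
    exact hv (mem_image.mpr ⟨i, by simpa using hξi, (mem_filter.mp hi).2⟩)

theorem activeNodes_nonempty (hξ : ξ ≠ 0) : (activeNodes lam ξ).Nonempty := by
  obtain ⟨j, hj⟩ := Function.ne_iff.mp hξ
  exact ⟨lam j, mem_image_of_mem lam (by simpa using hj)⟩

theorem activeNodes_val_le : (activeNodes lam ξ).val ≤ univ.val.map lam := by
  refine (Multiset.le_iff_subset (activeNodes lam ξ).nodup).mpr fun v hv => ?_
  obtain ⟨j, -, rfl⟩ := mem_image.mp (mem_val.mp hv)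
  exact Multiset.mem_map_of_mem lam (mem_univ_val j)

theorem IPoly_eq_nodeProd_mul_secularPoly :
    IPoly n lam ξ = nodeProd (univ.val.map lam - (activeNodes lam ξ).val) *
      secularPoly (activeNodes lam ξ) (nodeWeight lam ξ) := by
  set M := univ.val.map lam
  set t := activeNodes lam ξ
  calc IPoly n lam ξ
      = ∑ v ∈ univ.image lam, ∑ i with lam i = v, C (ξ i ^ 2) * nodeProd (M.erase (lam i)) := by
        rw [IPoly_eq_sum_nodeProd,
          sum_fiberwise_of_maps_to fun i _ => mem_image_of_mem lam (mem_univ i)]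
    _ = ∑ v ∈ univ.image lam, C (nodeWeight lam ξ v) * nodeProd (M.erase v) :=
        sum_congr rfl fun v _ => by
          rw [nodeWeight, map_sum, sum_mul]
          exact sum_congr rfl fun i hi => by rw [(mem_filter.mp hi).2]
    _ = ∑ v ∈ t, C (nodeWeight lam ξ v) * nodeProd (M.erase v) :=
        (sum_subset (image_subset_image (subset_univ _)) fun v _ hv => by
          rw [nodeWeight_eq_zero hv, C_0, zero_mul]).symm
    _ = nodeProd (M - t.val) * secularPoly t (nodeWeight lam ξ) := by
        rw [secularPoly, mul_sum]
        refine sum_congr rfl fun v hv => ?_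
        rw [Multiset.erase_eq_sub_add_erase activeNodes_val_le hv, nodeProd_add]
        ring

theorem degree_IPoly (hξ : ξ ≠ 0) : (IPoly n lam ξ).degree = (n - 1 : ℕ) := by
  rw [IPoly_eq_sum_nodeProd]
  exact degree_sum_C_mul_nodeProd _ _ (fun i _ => by simp) (sum_sq_pos_of_ne_zero hξ).ne'

theorem leadingCoeff_IPoly (hξ : ξ ≠ 0) :
    (IPoly n lam ξ).leadingCoeff = (-1) ^ (n - 1) * ∑ i, ξ i ^ 2 := by
  rw [IPoly_eq_sum_nodeProd]
  exact leadingCoeff_sum_C_mul_nodeProd _ _ (fun i _ => by simp) (sum_sq_pos_of_ne_zero hξ).ne'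

theorem interlaces_roots_IPoly (hξ : ξ ≠ 0) :
    Interlaces (IPoly n lam ξ).roots (univ.val.map lam) := by
  have hw : ∀ v ∈ activeNodes lam ξ, 0 < nodeWeight lam ξ v := fun v => nodeWeight_pos
  have ht := activeNodes_nonempty (lam := lam) hξ
  have hK : secularPoly (activeNodes lam ξ) (nodeWeight lam ξ) ≠ 0 := fun h => by
    simpa [h] using degree_secularPoly hw ht
  have h := (interlaces_roots_secularPoly hw ht).add_left
    (univ.val.map lam - (activeNodes lam ξ).val)
  rwa [tsub_add_cancel_of_le activeNodes_val_le, ← roots_nodeProd (_ - _), ← roots_mul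
    (mul_ne_zero (nodeProd_ne_zero _) hK), ← IPoly_eq_nodeProd_mul_secularPoly] at h

end IPoly

theorem stmt0 (n : ℕ) (lam : Fin n → ℝ) (hlam : Monotone lam)
    (ξ : Fin n → ℝ) (hξ : ξ ≠ 0) :
    (IPoly n lam ξ).degree = (n - 1 : ℕ) ∧
    (IPoly n lam ξ).leadingCoeff = (-1 : ℝ) ^ (n - 1) * ∑ i, (ξ i) ^ 2 ∧
    ((-1 : ℝ)) ^ (n - 1) * ∑ i, (ξ i) ^ 2 ≠ 0 ∧
    (∀ z : ℂ, aeval z (IPoly n lam ξ) = 0 → z.im = 0) ∧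
    ((IPoly n lam ξ).roots.sort (· ≤ ·)).length = n - 1 ∧
    (∀ i : ℕ, ∀ hi : i + 1 < n,
      lam ⟨i, by omega⟩ ≤ ((IPoly n lam ξ).roots.sort (· ≤ ·)).getD i 0 ∧
      ((IPoly n lam ξ).roots.sort (· ≤ ·)).getD i 0 ≤ lam ⟨i + 1, hi⟩) := by
  have hdeg := degree_IPoly (lam := lam) hξ
  have hI : IPoly n lam ξ ≠ 0 := fun h => by simp [h] at hdeg
  have hint := interlaces_roots_IPoly (lam := lam) hξ
  have hcard : (IPoly n lam ξ).roots.card = n - 1 := by simpa using hint.card_eq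
  refine ⟨hdeg, leadingCoeff_IPoly hξ, leadingCoeff_IPoly (lam := lam) hξ ▸
    leadingCoeff_ne_zero.mpr hI, fun z => im_eq_zero_of_aeval_eq_zero hI
    (by rw [hcard, natDegree_eq_of_degree_eq_some hdeg]), by rw [Multiset.length_sort, hcard],
    hint.le_getD_sort_le hlam 0⟩
end

section
/- Let L be a real symmetric n×n matrix with eigenvalues λ_1 ≤ λ_2 ≤ … ≤ λ_n (listed with multiplicity), and let 1 ≤ r < n be such that λ_r < λ_{r+1}. Define the polynomials p(t) = ∏_{j=1}^{r} (t − λ_j) and q(t) = ∏_{j=r+1}^{n} (λ_j − t). Then the symmetric matrix C = p(L) + q(L) is positive definite. If moreover λ_1 > 0, then the symmetric matrix C̄ = (∏_{j=r+1}^{n} λ_j)^{-1} p(L) + (∏_{j=1}^{r} λ_j)^{-1} q(L) is also positive definite. -/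
/-! Every point of the spectrum of `L` is some `λ_k`. If `k ≤ r`, then `p(λ_k) = 0` while every
factor `λ_j - λ_k` of `q(λ_k)` is positive because of the gap `λ_r < λ_{r+1}`; if `k > r` the
roles of `p` and `q` are exchanged. Hence `a p + b q` is positive on the spectrum of `L` for all
`a, b > 0`, and `a p(L) + b q(L)` is positive definite by the functional calculus. -/

open Polynomial Matrix
open scoped MatrixOrder ComplexOrder

namespace Matrix

variable {m 𝕜 : Type*} [Fintype m] [DecidableEq m] [RCLike 𝕜]

theorem IsHermitian.posDef_aeval {A : Matrix m m 𝕜} (hA : A.IsHermitian) {f : ℝ[X]}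
    (hf : ∀ x ∈ spectrum ℝ A, 0 < f.eval x) : (aeval A f).PosDef := by
  rw [← isStrictlyPositive_iff_posDef, ← cfc_polynomial f A hA]
  exact (cfc_isStrictlyPositive_iff _ A).2 hf

theorem exists_eq_of_mem_spectrum_of_charpoly_eq {K : Type*} [Field K] {A : Matrix m m K}
    {ι : Type*} {s : Finset ι} {μ : ι → K} (hchar : A.charpoly = ∏ i ∈ s, (X - C (μ i)))
    {x : K} (hx : x ∈ spectrum K A) : ∃ i ∈ s, μ i = x := by
  rw [mem_spectrum_iff_isRoot_charpoly, hchar, IsRoot, eval_prod,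
    Finset.prod_eq_zero_iff] at hx
  obtain ⟨i, hi, hroot⟩ := hx
  exact ⟨i, hi, by simpa [sub_eq_zero, eq_comm] using hroot⟩

end Matrix

section SpectralPolys

variable {n : ℕ} (lam : Fin n → ℝ) (r : ℕ)

-- The polynomials `p` and `q` of the statement; `lam j` is the paper's `λ_{j+1}`.
noncomputable def lowerSpectralPoly : ℝ[X] :=
  ∏ j ∈ Finset.univ.filter (fun j : Fin n => (j : ℕ) < r), (X - C (lam j))

noncomputable def upperSpectralPoly : ℝ[X] :=
  ∏ j ∈ Finset.univ.filter (fun j : Fin n => ¬ (j : ℕ) < r), (C (lam j) - X)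

def SeparatedAt : Prop :=
  ∀ i j : Fin n, (i : ℕ) < r → r ≤ (j : ℕ) → lam i < lam j

variable {lam r}

theorem eval_lowerSpectralPoly_of_lt {k : Fin n} (hk : (k : ℕ) < r) :
    (lowerSpectralPoly lam r).eval (lam k) = 0 := by
  rw [lowerSpectralPoly, eval_prod]
  exact Finset.prod_eq_zero (i := k) (by simp [hk]) (by simp)

theorem eval_upperSpectralPoly_of_le {k : Fin n} (hk : r ≤ (k : ℕ)) :
    (upperSpectralPoly lam r).eval (lam k) = 0 := by
  rw [upperSpectralPoly, eval_prod]
  exact Finset.prod_eq_zero (i := k) (by simp [hk]) (by simp)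

theorem eval_lowerSpectralPoly_pos_of_le (hsep : SeparatedAt lam r) {k : Fin n}
    (hk : r ≤ (k : ℕ)) :
    0 < (lowerSpectralPoly lam r).eval (lam k) := by
  rw [lowerSpectralPoly, eval_prod]
  refine Finset.prod_pos fun j hj => ?_
  simp only [Finset.mem_filter, Finset.mem_univ, true_and] at hj
  simpa using hsep j k hj hk

theorem eval_upperSpectralPoly_pos_of_lt (hsep : SeparatedAt lam r) {k : Fin n}
    (hk : (k : ℕ) < r) :
    0 < (upperSpectralPoly lam r).eval (lam k) := by
  rw [upperSpectralPoly, eval_prod]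
  refine Finset.prod_pos fun j hj => ?_
  simp only [Finset.mem_filter, Finset.mem_univ, true_and, not_lt] at hj
  simpa using hsep k j hk hj

theorem eval_smul_lowerSpectralPoly_add_smul_upperSpectralPoly_pos (hsep : SeparatedAt lam r)
    {a b : ℝ} (ha : 0 < a) (hb : 0 < b) (k : Fin n) :
    0 < (a • lowerSpectralPoly lam r + b • upperSpectralPoly lam r).eval (lam k) := by
  rw [eval_add, eval_smul, eval_smul, smul_eq_mul, smul_eq_mul]
  rcases lt_or_ge (k : ℕ) r with hk | hk
  · rw [eval_lowerSpectralPoly_of_lt hk, mul_zero, zero_add]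
    exact mul_pos hb (eval_upperSpectralPoly_pos_of_lt hsep hk)
  · rw [eval_upperSpectralPoly_of_le hk, mul_zero, add_zero]
    exact mul_pos ha (eval_lowerSpectralPoly_pos_of_le hsep hk)

end SpectralPolys

theorem Monotone.separatedAt {n r : ℕ} {lam : Fin n → ℝ} (hmono : Monotone lam)
    (hrn : r < n) (hgap : lam ⟨r - 1, by omega⟩ < lam ⟨r, hrn⟩) : SeparatedAt lam r :=
  fun i j hi hj =>
    calc lam i ≤ lam ⟨r - 1, by omega⟩ := hmono (Fin.le_def.2 (by simp; omega))
      _ < lam ⟨r, hrn⟩ := hgap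
      _ ≤ lam j := hmono (Fin.le_def.2 hj)

theorem stmt11 (n : ℕ) (L : Matrix (Fin n) (Fin n) ℝ) (hL : L.IsSymm)
    (lam : Fin n → ℝ) (hmono : Monotone lam)
    (hchar : L.charpoly = ∏ i, (X - C (lam i)))
    (r : ℕ) (hr1 : 1 ≤ r) (hrn : r < n)
    (hgap : lam ⟨r - 1, by omega⟩ < lam ⟨r, hrn⟩) :
    (Polynomial.aeval L
        (∏ j ∈ Finset.univ.filter (fun j : Fin n => (j : ℕ) < r), (X - C (lam j)))
      + Polynomial.aeval L
        (∏ j ∈ Finset.univ.filter (fun j : Fin n => ¬ (j : ℕ) < r),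
          (C (lam j) - X))).PosDef ∧
    (0 < lam ⟨0, by omega⟩ →
      ((∏ j ∈ Finset.univ.filter (fun j : Fin n => ¬ (j : ℕ) < r), lam j)⁻¹ •
          Polynomial.aeval L
            (∏ j ∈ Finset.univ.filter (fun j : Fin n => (j : ℕ) < r), (X - C (lam j)))
        + (∏ j ∈ Finset.univ.filter (fun j : Fin n => (j : ℕ) < r), lam j)⁻¹ •
          Polynomial.aeval L
            (∏ j ∈ Finset.univ.filter (fun j : Fin n => ¬ (j : ℕ) < r),
              (C (lam j) - X))).PosDef) := by
  have hsep := hmono.separatedAt hrn hgap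
  have hpos {a b : ℝ} (ha : 0 < a) (hb : 0 < b) : PosDef
      (a • aeval L (lowerSpectralPoly lam r) + b • aeval L (upperSpectralPoly lam r)) := by
    rw [← map_smul, ← map_smul, ← map_add]
    refine (isHermitian_iff_isSymm.2 hL).posDef_aeval fun x hx => ?_
    obtain ⟨k, -, rfl⟩ := exists_eq_of_mem_spectrum_of_charpoly_eq hchar hx
    exact eval_smul_lowerSpectralPoly_add_smul_upperSpectralPoly_pos hsep ha hb k
  constructor
  · have h := hpos one_pos one_pos
    rwa [one_smul, one_smul] at h
  intro hlam0
  have hlam (j : Fin n) : 0 < lam j := hlam0.trans_le (hmono (Fin.le_def.2 (Nat.zero_le _)))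
  exact hpos (inv_pos.2 (Finset.prod_pos fun j _ => hlam j))
    (inv_pos.2 (Finset.prod_pos fun j _ => hlam j))
end

section
/- Let u, v ∈ ℝ, set ρ² = u² + v², and let F > 0 and λ_1 > 0 be real numbers. Define the symmetric 2×2 matrices G = F·Id and Ḡ = (F / (λ_1 (λ_1 + λ_1 ρ² F)²)) · [[1 + F v², −F u v], [−F u v, 1 + F u²]]. Then G and Ḡ are positive definite, the matrix L(G,Ḡ) = (det Ḡ / det G)^{1/3} Ḡ⁻¹ G equals λ_1 · [[1 + F u², F u v], [F u v, 1 + F v²]], and its eigenvalues are λ_1 and λ_1(1 + ρ² F) = λ_1 + λ_1 ρ² F. -/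
open Polynomial

/-!
With `w = (u, v)` and `w⊥ = (v, -u)`, the matrix `Ḡ` is a positive multiple of `M = 1 + F w⊥ w⊥ᵀ`,
hence positive definite, with `det M = 1 + F ρ²` and `adj M = 1 + F w wᵀ` (in dimension two
`w wᵀ + w⊥ w⊥ᵀ = ρ² · 1`). So `Ḡ⁻¹ G` is a multiple of `1 + F w wᵀ`, and the normalising factor
`(det Ḡ / det G)^{1/3}` turns that multiple into exactly `λ₁`. Finally `1 + F w wᵀ` has the
eigenvalue `1` on `w⊥` and `1 + F ρ²` on `w`.
-/

/-- `L(G,Ḡ) = (det Ḡ / det G)^{1/3} · Ḡ⁻¹ G` for real `2×2` matrices (the case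
`n = 2` of `L = (det ḡ/det g)^{1/(n+1)} ḡ⁻¹ g`). -/
noncomputable def Lmat2 (G Gb : Matrix (Fin 2) (Fin 2) ℝ) : Matrix (Fin 2) (Fin 2) ℝ :=
  ((Gb.det / G.det) ^ ((3 : ℝ))⁻¹) • (Gb⁻¹ * G)

namespace Matrix

theorem charpoly_fin_two_eq_mul {R : Type*} [CommRing R] [Nontrivial R]
    {M : Matrix (Fin 2) (Fin 2) R} {a b : R} (htr : M.trace = a + b) (hdet : M.det = a * b) :
    M.charpoly = (X - C a) * (X - C b) := by
  rw [charpoly_fin_two, htr, hdet, C_add, C_mul]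
  ring

theorem posDef_one_add_smul_vecMulVec {n : Type*} [Fintype n] [DecidableEq n] {t : ℝ}
    (ht : 0 ≤ t) (w : n → ℝ) : (1 + t • vecMulVec w w).PosDef :=
  PosDef.one.add_posSemidef ((posSemidef_vecMulVec_self_star w).smul ht)

theorem one_add_smul_vecMulVec_fin_two {R : Type*} [CommRing R] (t a b : R) :
    1 + t • vecMulVec ![a, b] ![a, b] =
      !![1 + t * a ^ 2, t * a * b; t * a * b, 1 + t * b ^ 2] := by
  ext i j
  fin_cases i <;> fin_cases j <;> simp <;> ring

theorem inv_smul_eq_smul_adjugate {n K : Type*} [Fintype n] [DecidableEq n] [Field K]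
    (c : K) (M : Matrix n n K) : (c • M)⁻¹ = (c⁻¹ * M.det⁻¹) • M.adjugate := by
  rcases eq_or_ne c 0 with rfl | hc
  · simp
  rcases eq_or_ne M.det 0 with hM | hM
  · simp [hM, inv_def]
  refine inv_eq_right_inv ?_
  rw [smul_mul_smul_comm, mul_adjugate, smul_smul]
  field_simp
  simp

end Matrix

open Matrix

theorem Lmat2_smul_one_smul (F c : ℝ) (M : Matrix (Fin 2) (Fin 2) ℝ) :
    Lmat2 (F • 1) (c • M) =
      ((c ^ 2 * M.det / F ^ 2) ^ (3 : ℝ)⁻¹ * F * (c⁻¹ * M.det⁻¹)) • M.adjugate := by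
  simp [Lmat2, inv_smul_eq_smul_adjugate, smul_smul, mul_assoc]

theorem stmt13 (u v F l1 : ℝ) (hF : 0 < F) (hl1 : 0 < l1)
    (G Gb : Matrix (Fin 2) (Fin 2) ℝ)
    (hG : G = F • (1 : Matrix (Fin 2) (Fin 2) ℝ))
    (hGb : Gb = (F / (l1 * (l1 + l1 * (u ^ 2 + v ^ 2) * F) ^ 2)) •
      !![1 + F * v ^ 2, -(F * u * v); -(F * u * v), 1 + F * u ^ 2]) :
    G.PosDef ∧ Gb.PosDef ∧
    Lmat2 G Gb = l1 • !![1 + F * u ^ 2, F * u * v; F * u * v, 1 + F * v ^ 2] ∧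
    (Lmat2 G Gb).charpoly =
      (X - C l1) * (X - C (l1 + l1 * (u ^ 2 + v ^ 2) * F)) := by
  set d := 1 + F * (u ^ 2 + v ^ 2)
  have hd : 0 < d := by positivity
  rw [show l1 + l1 * (u ^ 2 + v ^ 2) * F = l1 * d by ring] at hGb ⊢
  set c := F / (l1 * (l1 * d) ^ 2) with hc
  set M := !![1 + F * v ^ 2, -(F * u * v); -(F * u * v), 1 + F * u ^ 2]
  set N := !![1 + F * u ^ 2, F * u * v; F * u * v, 1 + F * v ^ 2]
  have hM : M = 1 + F • vecMulVec ![v, -u] ![v, -u] := by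
    rw [one_add_smul_vecMulVec_fin_two]
    simp only [M, neg_sq, mul_neg, mul_right_comm F v u]
  have hdetM : M.det = d := by simp [M, det_fin_two_of]; ring
  have hadjM : M.adjugate = N := by simp [M, N, adjugate_fin_two_of]
  have hscalar : (c ^ 2 * d / F ^ 2) ^ (3 : ℝ)⁻¹ * F * (c⁻¹ * d⁻¹) = l1 := by
    have hcube : c ^ 2 * d / F ^ 2 = (l1 ^ 2 * d)⁻¹ ^ 3 := by
      rw [hc]; field_simp
    have hroot : ((l1 ^ 2 * d)⁻¹ ^ 3) ^ (3 : ℝ)⁻¹ = (l1 ^ 2 * d)⁻¹ := by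
      exact_mod_cast Real.pow_rpow_inv_natCast (by positivity) three_ne_zero
    rw [hcube, hroot, hc]
    field_simp
  have hL : Lmat2 G Gb = l1 • N := by
    rw [hG, hGb, Lmat2_smul_one_smul, hdetM, hadjM, hscalar]
  refine ⟨hG ▸ PosDef.one.smul hF,
    hGb ▸ hM ▸ (posDef_one_add_smul_vecMulVec hF.le _).smul (by positivity), hL, ?_⟩
  rw [hL]
  apply charpoly_fin_two_eq_mul
  · simp [N, trace_fin_two_of]; ring
  · simp [N, det_fin_two_of]; ring
end

section
/- Let u, v ∈ ℝ with (u, v) ≠ (0, 0), set ρ = √(u² + v²), and let 0 < a < b be real numbers. Put s = ρ (b + a)/(b − a), and define the symmetric 2×2 matrices G = (2 (b − a)/ρ) · Id and Ḡ = ((b − a)/(ρ a b))² · [[s − u, −v], [−v, s + u]]. Then G and Ḡ are positive definite, and the eigenvalues of the matrix L(G,Ḡ) = (det Ḡ / det G)^{1/3} Ḡ⁻¹ G are exactly a and b. -/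
/-!
For a `2 × 2` matrix the characteristic polynomial is `X² - tr · X + det`, so it suffices to show
`tr L = a + b` and `det L = a b`. Since `det L = (det Ḡ / det G)^{-1/3}` and here
`det Ḡ / det G = (a b)⁻³`, the scalar factor of `L` is `(a b)⁻¹`; with `G` a multiple of the
identity, `tr L` is then read off from `tr Ḡ⁻¹ = tr Ḡ / det Ḡ`.
-/

open Polynomial

namespace Matrix

theorem posDef_fin_two_of {p q r : ℝ} (hp : 0 < p) (hdet : 0 < !![p, q; q, r].det) :
    !![p, q; q, r].PosDef := by
  rw [det_fin_two_of] at hdet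
  refine PosDef.of_dotProduct_mulVec_pos ?_ fun x hx => ?_
  · ext i j
    fin_cases i <;> fin_cases j <;> rfl
  have hx' : x 0 ≠ 0 ∨ x 1 ≠ 0 := by
    by_contra! h
    exact hx (funext fun i => by fin_cases i <;> simp [h])
  have hform : p * (star x ⬝ᵥ !![p, q; q, r] *ᵥ x)
      = (p * x 0 + q * x 1) ^ 2 + (p * r - q * q) * x 1 ^ 2 := by
    simp [dotProduct, mulVec, Fin.sum_univ_two]
    ring
  refine pos_of_mul_pos_right (hform ▸ ?_) hp.le
  by_cases h1 : x 1 = 0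
  · have h0 : x 0 ≠ 0 := hx'.resolve_right (not_not.2 h1)
    simp only [h1, mul_zero, add_zero, mul_pow]
    positivity
  · positivity

theorem trace_inv_fin_two {K : Type*} [Field K] (A : Matrix (Fin 2) (Fin 2) K) :
    A⁻¹.trace = A.trace / A.det := by
  rw [inv_def, Ring.inverse_eq_inv', trace_smul, adjugate_fin_two, trace_fin_two, trace_fin_two]
  simp only [of_apply, cons_val', cons_val_zero, cons_val_one, empty_val', cons_val_fin_one,
    smul_eq_mul]
  ring

theorem charpoly_fin_two_eq_of_trace_of_det {R : Type*} [CommRing R] [Nontrivial R]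
    {A : Matrix (Fin 2) (Fin 2) R} {a b : R} (htr : A.trace = a + b) (hdet : A.det = a * b) :
    A.charpoly = (X - C a) * (X - C b) := by
  rw [charpoly_fin_two, htr, hdet, C_add, C_mul]
  ring

end Matrix

theorem det_Lmat2 {G Gb : Matrix (Fin 2) (Fin 2) ℝ} (h : 0 < Gb.det / G.det) :
    (Lmat2 G Gb).det = ((Gb.det / G.det) ^ (3 : ℝ)⁻¹)⁻¹ := by
  have ht : ((Gb.det / G.det) ^ (3 : ℝ)⁻¹) ^ 3 = Gb.det / G.det := by
    exact_mod_cast Real.rpow_inv_natCast_pow h.le three_ne_zero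
  have ht0 : (Gb.det / G.det) ^ (3 : ℝ)⁻¹ ≠ 0 := by positivity
  have hinv : Gb.det⁻¹ * G.det = (Gb.det / G.det)⁻¹ := by rw [inv_div, inv_mul_eq_div]
  rw [Lmat2, Matrix.det_smul, Matrix.det_mul, Matrix.det_nonsing_inv, Ring.inverse_eq_inv',
    Fintype.card_fin, hinv]
  generalize (Gb.det / G.det) ^ (3 : ℝ)⁻¹ = t at ht ht0 ⊢
  rw [← ht]
  field_simp

theorem trace_Lmat2_smul_one (c : ℝ) (Gb : Matrix (Fin 2) (Fin 2) ℝ) :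
    (Lmat2 (c • 1) Gb).trace = (Gb.det / c ^ 2) ^ (3 : ℝ)⁻¹ * c * Gb.trace / Gb.det := by
  rw [Lmat2, Matrix.det_smul, Matrix.det_one, Matrix.mul_smul, Matrix.mul_one, smul_smul,
    Matrix.trace_smul, Matrix.trace_inv_fin_two, Fintype.card_fin, mul_one, smul_eq_mul]
  ring

theorem stmt15 (u v a b ρ s : ℝ) (huv : ¬ (u = 0 ∧ v = 0))
    (hρ : ρ = Real.sqrt (u ^ 2 + v ^ 2))
    (ha : 0 < a) (hab : a < b)
    (hs : s = ρ * (b + a) / (b - a))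
    (G Gb : Matrix (Fin 2) (Fin 2) ℝ)
    (hG : G = (2 * (b - a) / ρ) • (1 : Matrix (Fin 2) (Fin 2) ℝ))
    (hGb : Gb = ((b - a) / (ρ * a * b)) ^ 2 • !![s - u, -v; -v, s + u]) :
    G.PosDef ∧ Gb.PosDef ∧
    (Lmat2 G Gb).charpoly = (X - C a) * (X - C b) := by
  have hb : 0 < b := ha.trans hab
  have hba : 0 < b - a := sub_pos.2 hab
  have hρ0 : 0 < ρ := hρ ▸ Real.sqrt_pos.2 (by rcases not_and_or.mp huv with h | h <;> positivity)
  have hρ2 : u ^ 2 + v ^ 2 = ρ ^ 2 := by rw [hρ, Real.sq_sqrt (by positivity)]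
  have hdetM : (!![s - u, -v; -v, s + u]).det = 4 * a * b * ρ ^ 2 / (b - a) ^ 2 := by
    rw [Matrix.det_fin_two_of, hs]
    field_simp
    linear_combination (-(b - a) ^ 2) * hρ2
  have hsu : 0 < s - u := by
    have : ρ < s := by rw [hs, lt_div_iff₀ hba]; nlinarith
    nlinarith [sq_nonneg v]
  have hratio : Gb.det / (2 * (b - a) / ρ) ^ 2 = (a * b)⁻¹ ^ 3 := by
    rw [hGb, Matrix.det_smul, hdetM, Fintype.card_fin]
    field_simp
    ring
  have hscale : (Gb.det / (2 * (b - a) / ρ) ^ 2) ^ (3 : ℝ)⁻¹ = (a * b)⁻¹ := by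
    rw [hratio]
    exact_mod_cast Real.pow_rpow_inv_natCast (by positivity) three_ne_zero
  have hdetG : G.det = (2 * (b - a) / ρ) ^ 2 := by
    rw [hG, Matrix.det_smul, Matrix.det_one, Fintype.card_fin, mul_one]
  refine ⟨hG ▸ Matrix.PosDef.one.smul (by positivity),
    hGb ▸ (Matrix.posDef_fin_two_of hsu (hdetM ▸ by positivity)).smul
      (by positivity), Matrix.charpoly_fin_two_eq_of_trace_of_det ?_ ?_⟩
  · rw [hG, trace_Lmat2_smul_one, hscale, hGb, Matrix.trace_smul, Matrix.trace_fin_two_of,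
      Matrix.det_smul, hdetM, Fintype.card_fin, smul_eq_mul, hs]
    field_simp
    ring
  · rw [det_Lmat2 (by rw [hdetG, hratio]; positivity), hdetG, hscale, inv_inv]
end
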